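/- Let f ∈ H̄₀² and let q ∈ M_n be an irreducible critical point of φ_{f,n}. Then ⟨ p/q², f − L_q/q ⟩ = 0 for every polynomial p ∈ P_{2n−1}. -/

import Mathlib

open Complex Polynomial MeasureTheory Filter Set

noncomputable section

namespace RatApprox

/-- The point of modulus `ρ` and argument `θ` in the complex plane. -/
def circ (ρ θ : ℝ) : ℂ := (ρ : ℂ) * Complex.exp (θ * Complex.I)

/-- The `L²(𝕋)` inner product `⟨f,g⟩ = ∫_𝕋 f·conj g |dτ|/2π` of the boundary values. -/
def circInner (f g : ℂ → ℂ) : ℂ :=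
  (2 * Real.pi)⁻¹ * ∫ θ in (0:ℝ)..(2 * Real.pi), f (circ 1 θ) * (starRingEnd ℂ) (g (circ 1 θ))

/-- The squared `L²(𝕋)` norm. -/
def circNormSq (f : ℂ → ℂ) : ℝ := (circInner f f).re

/-- Membership in `L²` of the unit circle. -/
def MemL2 (f : ℂ → ℂ) : Prop :=
  MemLp (fun θ : ℝ => f (circ 1 θ)) 2 (volume.restrict (Set.Ioc (0:ℝ) (2 * Real.pi)))

/-- Fourier coefficient of index `k` of a boundary function. -/
def fourierCoef (f : ℂ → ℂ) (k : ℤ) : ℂ :=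
  (2 * Real.pi)⁻¹ * ∫ θ in (0:ℝ)..(2 * Real.pi),
    f (circ 1 θ) * Complex.exp (-((k : ℂ) * θ * Complex.I))

/-- The Hardy space `H²` of the unit disk (boundary values together with the
holomorphic extension inside the disk). -/
def MemH2 (f : ℂ → ℂ) : Prop :=
  MemL2 f ∧ (∀ k : ℤ, k < 0 → fourierCoef f k = 0) ∧
    DifferentiableOn ℂ f {z : ℂ | ‖z‖ < 1}

/-- The space `H̄₀²`: the orthogonal complement of `H²` in `L²`, identified with traces of
functions holomorphic in `|z|>1` vanishing at infinity. -/
def MemH2bar0 (f : ℂ → ℂ) : Prop :=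
  MemL2 f ∧ (∀ k : ℤ, 0 ≤ k → fourierCoef f k = 0) ∧
    DifferentiableOn ℂ f {z : ℂ | 1 < ‖z‖} ∧
    Tendsto f (comap (fun z : ℂ => ‖z‖) atTop) (nhds 0)

/-- The class `H̄₀` of members of `H̄₀²` extending holomorphically across the unit circle. -/
def MemH2bar0Ext (f : ℂ → ℂ) : Prop :=
  MemH2bar0 f ∧ ∃ ρ : ℝ, 0 < ρ ∧ ρ < 1 ∧ DifferentiableOn ℂ f {z : ℂ | ρ < ‖z‖}

/-- The polynomial `∑ c j X^j` of degree `< n`. -/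
def liftPoly (n : ℕ) (c : Fin n → ℂ) : ℂ[X] :=
  ∑ j : Fin n, Polynomial.C (c j) * Polynomial.X ^ (j : ℕ)

/-- The monic polynomial `X^n + ∑ d j X^j` with non-leading coefficients `d`. -/
def monicOf (n : ℕ) (d : Fin n → ℂ) : ℂ[X] := Polynomial.X ^ n + liftPoly n d

/-- `M_n`: monic polynomials of degree `n` with all `n` zeros in the open unit disk. -/
def MemMn (n : ℕ) (q : ℂ[X]) : Prop :=
  q.Monic ∧ q.natDegree = n ∧ ∀ z ∈ q.roots, ‖z‖ < 1

/-- The closure `M̄_n` of `M_n`: monic polynomials of degree `n` with all zeros in the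
closed unit disk. -/
def MemMnCl (n : ℕ) (q : ℂ[X]) : Prop :=
  q.Monic ∧ q.natDegree = n ∧ ∀ z ∈ q.roots, ‖z‖ ≤ 1

/-- The rational function `p/q` (with junk value `0` at poles). -/
def ratFun (p q : ℂ[X]) (z : ℂ) : ℂ := p.eval z / q.eval z

/-- `R_n = { p/q : p ∈ P_{n−1}, q ∈ M_n }`. -/
def MemRn (n : ℕ) (r : ℂ → ℂ) : Prop :=
  ∃ p q : ℂ[X], p.degree < (n : WithBot ℕ) ∧ MemMn n q ∧ r = ratFun p q

/-- Critical point of a real-valued map on a real normed space: all directional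
derivatives vanish. -/
def IsCritPt {E : Type*} [NormedAddCommGroup E] [NormedSpace ℝ E] (Φ : E → ℝ) (x : E) : Prop :=
  ∀ v : E, HasDerivAt (fun t : ℝ => Φ (x + t • v)) 0 0

/-- The error map `(p,q) ↦ ‖f − p/q‖₂²` in the coordinates given by the coefficients of `p`
and the non-leading coefficients of `q`. -/
def errFun (f : ℂ → ℂ) (n : ℕ) (pq : (Fin n → ℂ) × (Fin n → ℂ)) : ℝ :=
  circNormSq (fun z => f z - ratFun (liftPoly n pq.1) (monicOf n pq.2) z)

/-- `r ∈ R_n` is a critical point of `E_{f,n}` if `r = p/q` for some critical pair `(p,q)`. -/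
def IsCriticalPointE (f : ℂ → ℂ) (n : ℕ) (r : ℂ → ℂ) : Prop :=
  ∃ pq : (Fin n → ℂ) × (Fin n → ℂ), MemMn n (monicOf n pq.2) ∧
    IsCritPt (errFun f n) pq ∧ r = ratFun (liftPoly n pq.1) (monicOf n pq.2)

/-- `L/q` is the orthogonal projection of `f` onto `V_q = P_{n−1}/q`. -/
def IsOrthProjPoly (f : ℂ → ℂ) (n : ℕ) (q L : ℂ[X]) : Prop :=
  L.degree < (n : WithBot ℕ) ∧
    ∀ p : ℂ[X], p.degree < (n : WithBot ℕ) →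
      circInner (fun z => f z - ratFun L q z) (ratFun p q) = 0

/-- The polynomial `L_q ∈ P_{n−1}` such that `L_q/q` is the orthogonal projection of `f`
onto `V_q` (junk value `0` if it does not exist). -/
def Lpoly (f : ℂ → ℂ) (n : ℕ) (q : ℂ[X]) : ℂ[X] :=
  letI := Classical.propDecidable (∃ L, IsOrthProjPoly f n q L)
  if h : ∃ L, IsOrthProjPoly f n q L then h.choose else 0

/-- The map `φ_{f,n} : q ↦ ‖f − L_q/q‖₂²` in the coordinates given by the non-leading
coefficients of `q`. -/
def phiCoord (f : ℂ → ℂ) (n : ℕ) (d : Fin n → ℂ) : ℝ :=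
  circNormSq (fun z => f z - ratFun (Lpoly f n (monicOf n d)) (monicOf n d) z)

/-- `q ∈ M_n` is a critical point of `φ_{f,n}`. -/
def IsCriticalPhi (f : ℂ → ℂ) (n : ℕ) (q : ℂ[X]) : Prop :=
  ∃ d : Fin n → ℂ, monicOf n d = q ∧ IsCritPt (phiCoord f n) d

/-- `f^σ(z) = (1/z)·conj(f(1/conj z))`. -/
def sigmaFun (f : ℂ → ℂ) (z : ℂ) : ℂ := z⁻¹ * (starRingEnd ℂ) (f (((starRingEnd ℂ) z)⁻¹))

/-- `p̌(z) = conj(p(1/conj z))`. -/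
def checkFun (p : ℂ[X]) (z : ℂ) : ℂ := (starRingEnd ℂ) (p.eval (((starRingEnd ℂ) z)⁻¹))

/-- The reciprocal polynomial `q̃(z) = z^n·conj(q(1/conj z))` of a polynomial of degree `n`. -/
def recipPoly (n : ℕ) (q : ℂ[X]) : ℂ[X] := (q.map (starRingEnd ℂ)).reflect n

/-- The contour-integral extension of `u_q`:
`u_q(z) = (1/2πi)·∫_{|τ|=ρ} (f(τ)q(τ)/q̃(τ))·dτ/(z−τ)`. -/
def uExt (f : ℂ → ℂ) (ρ : ℝ) (n : ℕ) (q : ℂ[X]) (z : ℂ) : ℂ :=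
  (2 * Real.pi)⁻¹ * ∫ θ in (0:ℝ)..(2 * Real.pi),
    f (circ ρ θ) * q.eval (circ ρ θ) / (recipPoly n q).eval (circ ρ θ) * circ ρ θ /
      (z - circ ρ θ)

/-- The contour-integral extension of `L_q`:
`L_q(z) = (1/2πi)·∫_{|τ|=ρ} (f(τ)/q̃(τ))·(q(z)q̃(τ) − q̃(z)q(τ))/(z−τ)·dτ`. -/
def LExt (f : ℂ → ℂ) (ρ : ℝ) (n : ℕ) (q : ℂ[X]) (z : ℂ) : ℂ :=
  (2 * Real.pi)⁻¹ * ∫ θ in (0:ℝ)..(2 * Real.pi),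
    f (circ ρ θ) / (recipPoly n q).eval (circ ρ θ) *
      ((q.eval z * (recipPoly n q).eval (circ ρ θ) -
         (recipPoly n q).eval z * q.eval (circ ρ θ)) / (z - circ ρ θ)) * circ ρ θ

/-- The smooth extension of `φ_{f,n}`: `φ(q) = (1/2πi)∫_𝕋 u_q·u_q^σ dτ`. -/
def phiExt (f : ℂ → ℂ) (ρ : ℝ) (n : ℕ) (d : Fin n → ℂ) : ℝ :=
  ((2 * Real.pi)⁻¹ * ∫ θ in (0:ℝ)..(2 * Real.pi),
    uExt f ρ n (monicOf n d) (circ 1 θ) * sigmaFun (uExt f ρ n (monicOf n d)) (circ 1 θ) *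
      circ 1 θ).re

/-- The Hessian bilinear form of `Φ` at `x`. -/
def hessBil {E : Type*} [NormedAddCommGroup E] [NormedSpace ℝ E] (Φ : E → ℝ) (x v w : E) : ℝ :=
  iteratedFDeriv ℝ 2 Φ x ![v, w]

/-- The Hessian quadratic form of `Φ` at `x`. -/
def hessQ {E : Type*} [NormedAddCommGroup E] [NormedSpace ℝ E] (Φ : E → ℝ) (x v : E) : ℝ :=
  hessBil Φ x v v

/-- Nondegeneracy of the Hessian of `Φ` at `x`. -/
def HessNondeg {E : Type*} [NormedAddCommGroup E] [NormedSpace ℝ E] (Φ : E → ℝ) (x : E) : Prop :=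
  ∀ v : E, (∀ w : E, hessBil Φ x v w = 0) → v = 0

/-- The Morse index: the largest dimension of a subspace on which the Hessian quadratic
form is negative definite. -/
def morseIndex {E : Type*} [NormedAddCommGroup E] [NormedSpace ℝ E] (Φ : E → ℝ) (x : E) : ℕ :=
  sSup {k : ℕ | ∃ W : Submodule ℝ E, Module.finrank ℝ W = k ∧
    ∀ v ∈ W, v ≠ 0 → hessQ Φ x v < 0}

/-- `g(θ)` (a non-vanishing `2π`-periodic function on `𝕋`, parametrized by the angle) has
winding number `m` about the origin. -/
def HasWindingNumber (g : ℝ → ℂ) (m : ℤ) : Prop :=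
  ∃ r α : ℝ → ℝ, Continuous r ∧ Continuous α ∧ (∀ θ, 0 < r θ) ∧
    (∀ θ, g θ = (r θ : ℂ) * Complex.exp (α θ * Complex.I)) ∧
    α (2 * Real.pi) - α 0 = 2 * Real.pi * (m : ℝ)

/-- The density of the normalized arcsine distribution `ω` on `[a,b]` with respect to
Lebesgue measure. -/
def arcsineDens (a b t : ℝ) : ℝ := (Real.pi * Real.sqrt ((t - a) * (b - t)))⁻¹

/-- A complex measure of class `M`: `dμ = μ̇ dω` on `[a,b] ⊂ (−1,1)` with `μ̇`
Dini-continuous, non-vanishing, and with an argument of bounded variation. -/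
structure ClassM where
  a : ℝ
  b : ℝ
  density : ℝ → ℂ
  ha : -1 < a
  hab : a < b
  hb : b < 1
  nonvanish : ∀ t ∈ Set.Icc a b, density t ≠ 0
  dini : ∃ ω : ℝ → ℝ, (∀ t, 0 ≤ ω t) ∧ Monotone ω ∧
    (∀ s t : ℝ, s ∈ Set.Icc a b → t ∈ Set.Icc a b →
      ‖density s - density t‖ ≤ ω |s - t|) ∧
    ∃ ε : ℝ, 0 < ε ∧ IntervalIntegrable (fun t => ω t / t) volume 0 ε
  argBV : ∃ argf : ℝ → ℝ, BoundedVariationOn argf (Set.Icc a b) ∧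
    ∀ t ∈ Set.Icc a b, density t = (‖density t‖ : ℂ) * Complex.exp (argf t * Complex.I)

/-- The Cauchy transform `f_μ(z) = ∫ dμ(t)/(z−t)` of a measure `dμ = μ̇ dω` of class `M`. -/
def cauchyTransform (M : ClassM) (z : ℂ) : ℂ :=
  ∫ t in M.a..M.b, M.density t / (z - (t : ℂ)) * (arcsineDens M.a M.b t : ℂ)

/-- The segment `[a,b]` viewed as a subset of `ℂ`. -/
def segC (a b : ℝ) : Set ℂ := {z : ℂ | z.im = 0 ∧ z.re ∈ Set.Icc a b}

/-- `w(z) = √((z−a)(z−b))`: the branch holomorphic off `[a,b]` with `w(z)/z → 1` at `∞`. -/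
def IsBranchW (a b : ℝ) (w : ℂ → ℂ) : Prop :=
  DifferentiableOn ℂ w (segC a b)ᶜ ∧ (∀ z ∉ segC a b, (w z) ^ 2 = (z - (a:ℂ)) * (z - (b:ℂ))) ∧
    Tendsto (fun z => w z / z) (comap (fun z : ℂ => ‖z‖) atTop) (nhds 1)

/-- The conformal map `φ(z) = (2/(b−a))(z − (a+b)/2 − w(z))` of `C̄∖[a,b]` onto `𝔻`. -/
def joukMap (a b : ℝ) (w : ℂ → ℂ) (z : ℂ) : ℂ :=
  (2 / ((b : ℂ) - (a : ℂ))) * (z - ((a : ℂ) + (b : ℂ)) / 2 - w z)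

/-- The geometric mean `G_h = exp ∫ log h dω`, given a branch `Lh` of `log h` on `[a,b]`. -/
def geomMean (a b : ℝ) (Lh : ℝ → ℂ) : ℂ :=
  Complex.exp (∫ t in a..b, Lh t * (arcsineDens a b t : ℂ))

/-- The Szegő function `S_h`, given a branch `Lh` of `log h` on `[a,b]`. -/
def szego (a b : ℝ) (w : ℂ → ℂ) (Lh : ℝ → ℂ) (z : ℂ) : ℂ :=
  Complex.exp (w z / 2 * ∫ t in a..b, Lh t / (z - (t : ℂ)) * (arcsineDens a b t : ℂ)
    - (1 / 2) * ∫ t in a..b, Lh t * (arcsineDens a b t : ℂ))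

/-- An interpolation scheme: for each `n`, a multiset of `n` points. -/
structure InterpScheme where
  E : ℕ → Multiset ℂ
  card_eq : ∀ n, Multiset.card (E n) = n

/-- The support of an interpolation scheme. -/
def schemeSupp (S : InterpScheme) : Set ℂ :=
  ⋂ n : ℕ, closure (⋃ k : ℕ, ⋃ _ : n ≤ k, {z : ℂ | z ∈ S.E k})

/-- Admissibility of an interpolation scheme (relative to the conformal map `φmap` and the
domain `DF`). -/
def Admissible (S : InterpScheme) (φmap : ℂ → ℂ) (DF : Set ℂ) : Prop :=
  (∃ C : ℝ, ∀ n, (((S.E n).map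
      (fun e => ‖φmap e - φmap ((starRingEnd ℂ) e)‖)).sum ≤ C)) ∧
  schemeSupp S ⊆ DF ∧
  ∃ σ : Measure ℂ, IsProbabilityMeasure σ ∧
    Integrable (fun p : ℂ × ℂ => Real.log (‖p.1 - p.2‖)) (σ.prod σ) ∧
    ∀ g : ℂ → ℝ, Continuous g → HasCompactSupport g →
      Tendsto (fun n : ℕ => (((S.E n).map g).sum) / (n : ℝ)) atTop (nhds (∫ z, g z ∂σ))

/-- `R_n(E;z) = ∏_{e ∈ E_n} (φ(z)−φ(e))/(1−φ(z)φ(e))`. -/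
def RnFun (S : InterpScheme) (φmap : ℂ → ℂ) (n : ℕ) (z : ℂ) : ℂ :=
  ((S.E n).map (fun e => (φmap z - φmap e) / (1 - φmap z * φmap e))).prod

/-- The Blaschke-type product over a fixed multiset of points (used for the poles of the
rational summand `r`). -/
def RFun (P : Multiset ℂ) (φmap : ℂ → ℂ) (z : ℂ) : ℂ :=
  (P.map (fun e => (φmap z - φmap e) / (1 - φmap z * φmap e))).prod

/-- The (linearized) definition of the `n`-th diagonal multipoint Padé approximant
`p/ℓ` to `F` on `DF`, with interpolation polynomial `v` (one point being `∞`). -/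
def IsPade (F : ℂ → ℂ) (DF : Set ℂ) (v : ℂ[X]) (n : ℕ) (p ℓ : ℂ[X]) : Prop :=
  p.degree ≤ (n : WithBot ℕ) ∧ ℓ.degree ≤ (n : WithBot ℕ) ∧ ℓ ≠ 0 ∧
  ∃ g : ℂ → ℂ, DifferentiableOn ℂ g DF ∧
    (∀ z ∈ DF, (v.eval z) ^ 2 * g z = ℓ.eval z * F z - p.eval z) ∧
    ∃ C R : ℝ, ∀ z : ℂ, R ≤ ‖z‖ →
      ‖g z‖ ≤ C / ‖z‖ ^ (n + 1)



/-!
Write `e = f − L_q/q`. Since `L_q` and `q` are coprime, Bézout writes every `p ∈ P_{2n−1}` as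
`a q + b L_q` with `a, b ∈ P_{n−1}`, so `p/q² = a/q + L_q b/q²`. The first term is orthogonal to
`e` because `L_q/q` is the orthogonal projection of `f` onto `V_q`. For the second, perturb `q`
to `q + t b` while keeping the numerator `L_q`: `ψ(t) = ‖f − L_q/(q + t b)‖₂²` bounds
`φ_{f,n}(q + t b)` from above, with equality at `t = 0`, so criticality forces
`ψ'(0) = 2 Re ⟨L_q b/q², e⟩ = 0`; using `i b` instead of `b` kills the imaginary part. The
derivative of `ψ` comes from the exact expansion
`f − L_q/(q + t b) = e + t L_q b/q² − t² L_q b²/(q²(q + t b))` in `L²`.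
-/

open Metric Topology
open scoped InnerProductSpace

abbrev circleMeasure : Measure ℝ := volume.restrict (Ioc 0 (2 * Real.pi))

theorem circ_one_mem_sphere (θ : ℝ) : circ 1 θ ∈ sphere (0 : ℂ) 1 := by
  simp [circ, Complex.norm_exp_ofReal_mul_I]

theorem continuous_circ_one : Continuous (circ 1) := by
  unfold circ; fun_prop

theorem MemL2.of_continuousOn {g : ℂ → ℂ} (hg : ContinuousOn g (sphere 0 1)) : MemL2 g := by
  obtain ⟨C, hC⟩ := (isCompact_sphere (0 : ℂ) 1).exists_bound_of_continuousOn hg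
  have hcont : Continuous fun θ => g (circ 1 θ) :=
    hg.comp_continuous continuous_circ_one circ_one_mem_sphere
  exact (memLp_top_of_bound hcont.aestronglyMeasurable C
    (ae_of_all _ fun θ => hC _ (circ_one_mem_sphere θ))).mono_exponent le_top

theorem memL2_ratFun (p : ℂ[X]) {q : ℂ[X]} (hq : ∀ z ∈ sphere (0 : ℂ) 1, q.eval z ≠ 0) :
    MemL2 (ratFun p q) :=
  .of_continuousOn (p.continuous.continuousOn.div q.continuous.continuousOn hq)

section L2

variable {g h : ℂ → ℂ}

def MemL2.toL2 (hg : MemL2 g) : Lp ℂ 2 circleMeasure := MemLp.toLp _ hg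

theorem MemL2.add (hg : MemL2 g) (hh : MemL2 h) : MemL2 (fun z => g z + h z) :=
  MemLp.add hg hh

theorem MemL2.sub (hg : MemL2 g) (hh : MemL2 h) : MemL2 (fun z => g z - h z) :=
  MemLp.sub hg hh

theorem MemL2.const_mul (hg : MemL2 g) (c : ℂ) : MemL2 (fun z => c * g z) :=
  MemLp.const_smul hg c

theorem MemL2.toL2_add (hg : MemL2 g) (hh : MemL2 h) :
    (hg.add hh).toL2 = hg.toL2 + hh.toL2 :=
  MemLp.toLp_add hg hh

theorem MemL2.toL2_sub (hg : MemL2 g) (hh : MemL2 h) :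
    (hg.sub hh).toL2 = hg.toL2 - hh.toL2 :=
  MemLp.toLp_sub hg hh

theorem MemL2.toL2_const_mul (hg : MemL2 g) (c : ℂ) :
    (hg.const_mul c).toL2 = c • hg.toL2 :=
  MemLp.toLp_const_smul c hg

theorem MemL2.toL2_congr (hg : MemL2 g) (hh : MemL2 h)
    (hgh : ∀ z ∈ sphere (0 : ℂ) 1, g z = h z) :
    hg.toL2 = hh.toL2 :=
  MemLp.toLp_congr hg hh (ae_of_all _ fun θ => hgh _ (circ_one_mem_sphere θ))

theorem MemL2.norm_toL2_le (hg : MemL2 g) {C : ℝ} (hC0 : 0 ≤ C)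
    (hC : ∀ z ∈ sphere (0 : ℂ) 1, ‖g z‖ ≤ C) :
    ‖hg.toL2‖ ≤ √(2 * Real.pi) * C := by
  refine (Lp.norm_le_of_ae_bound hC0 ?_).trans_eq ?_
  · filter_upwards [hg.coeFn_toLp] with θ hθ
    rw [MemL2.toL2, hθ]
    exact hC _ (circ_one_mem_sphere θ)
  · congr 1
    simp [measureUnivNNReal, Real.sqrt_eq_rpow, ENNReal.coe_toNNReal_eq_toReal,
      ENNReal.toReal_ofReal Real.pi_pos.le]

theorem circInner_eq_inner (hg : MemL2 g) (hh : MemL2 h) :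
    circInner g h = (2 * Real.pi)⁻¹ * ⟪hh.toL2, hg.toL2⟫_ℂ := by
  rw [circInner, intervalIntegral.integral_of_le (by positivity), L2.inner_def]
  congr 1
  refine integral_congr_ae ?_
  filter_upwards [hg.coeFn_toLp, hh.coeFn_toLp] with θ hgθ hhθ
  simp [MemL2.toL2, hgθ, hhθ]

theorem circNormSq_eq_norm_sq (hg : MemL2 g) :
    circNormSq g = (2 * Real.pi)⁻¹ * ‖hg.toL2‖ ^ 2 := by
  rw [circNormSq, circInner_eq_inner hg hg, Complex.re_ofReal_mul]
  exact congrArg _ (inner_self_eq_norm_sq (𝕜 := ℂ) _)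

theorem circInner_add_left {g₁ g₂ : ℂ → ℂ} (hg₁ : MemL2 g₁) (hg₂ : MemL2 g₂)
    (hh : MemL2 h) :
    circInner (fun z => g₁ z + g₂ z) h = circInner g₁ h + circInner g₂ h := by
  rw [circInner_eq_inner (hg₁.add hg₂) hh, circInner_eq_inner hg₁ hh,
    circInner_eq_inner hg₂ hh, MemL2.toL2_add, inner_add_right, mul_add]

theorem circInner_const_mul_left (c : ℂ) (g h : ℂ → ℂ) :
    circInner (fun z => c * g z) h = c * circInner g h := by
  simp only [circInner, mul_assoc, intervalIntegral.integral_const_mul]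
  ring

theorem circInner_conj_symm (g h : ℂ → ℂ) :
    circInner g h = starRingEnd ℂ (circInner h g) := by
  have h2π : (0 : ℝ) ≤ 2 * Real.pi := by positivity
  rw [circInner, circInner, intervalIntegral.integral_of_le h2π,
    intervalIntegral.integral_of_le h2π, map_mul, ← integral_conj]
  simp [mul_comm, map_ofNat]

end L2

theorem liftPoly_add (n : ℕ) (c d : Fin n → ℂ) :
    liftPoly n (c + d) = liftPoly n c + liftPoly n d := by
  simp [liftPoly, add_mul, Finset.sum_add_distrib]

theorem liftPoly_smul (n : ℕ) (a : ℂ) (c : Fin n → ℂ) :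
    liftPoly n (a • c) = a • liftPoly n c := by
  simp [liftPoly, Finset.smul_sum, Polynomial.smul_eq_C_mul, mul_assoc]

theorem monicOf_add_smul (n : ℕ) (d v : Fin n → ℂ) (t : ℝ) :
    monicOf n (d + t • v) = monicOf n d + (t : ℂ) • liftPoly n v := by
  rw [monicOf, monicOf, liftPoly_add, ← liftPoly_smul, add_assoc]
  rfl

theorem exists_liftPoly_eq {n : ℕ} {p : ℂ[X]} (hp : p.degree < n) :
    ∃ c : Fin n → ℂ, liftPoly n c = p := by
  rcases eq_or_ne p 0 with rfl | hp0
  · exact ⟨0, by simp [liftPoly]⟩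
  refine ⟨fun j => p.coeff j, ?_⟩
  rw [liftPoly, Fin.sum_univ_eq_sum_range (fun j => C (p.coeff j) * X ^ j) n]
  simp only [C_mul_X_pow_eq_monomial]
  exact (as_sum_range' p n ((natDegree_lt_iff_degree_lt hp0).2 hp)).symm

section Projection

variable {f : ℂ → ℂ} {q : ℂ[X]}

def ratFunL2 (hq : ∀ z ∈ sphere (0 : ℂ) 1, q.eval z ≠ 0) :
    ℂ[X] →ₗ[ℂ] Lp ℂ 2 circleMeasure where
  toFun p := (memL2_ratFun p hq).toL2
  map_add' p₁ p₂ := by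
    rw [← MemL2.toL2_add]
    exact MemL2.toL2_congr _ _ fun z _ => by simp [ratFun, add_div]
  map_smul' a p := by
    rw [RingHom.id_apply, ← MemL2.toL2_const_mul]
    exact MemL2.toL2_congr _ _ fun z _ => by simp [ratFun, mul_div_assoc]

theorem exists_isOrthProjPoly (hq : ∀ z ∈ sphere (0 : ℂ) 1, q.eval z ≠ 0) (hf : MemL2 f)
    (n : ℕ) : ∃ L, IsOrthProjPoly f n q L := by
  let K := (degreeLT ℂ n).map (ratFunL2 hq)
  obtain ⟨L, hL, hLK⟩ := Submodule.mem_map.1 (K.starProjection_apply_mem hf.toL2)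
  refine ⟨L, mem_degreeLT.1 hL, fun p hp => ?_⟩
  have horth := K.inner_right_of_mem_orthogonal
    (Submodule.mem_map_of_mem (mem_degreeLT.2 hp)) (K.sub_starProjection_mem_orthogonal hf.toL2)
  rw [← hLK] at horth
  rw [circInner_eq_inner (hf.sub (memL2_ratFun L hq)) (memL2_ratFun p hq),
    MemL2.toL2_sub hf (memL2_ratFun L hq)]
  exact mul_eq_zero_of_right _ horth

theorem isOrthProjPoly_Lpoly (hq : ∀ z ∈ sphere (0 : ℂ) 1, q.eval z ≠ 0) (hf : MemL2 f)
    (n : ℕ) : IsOrthProjPoly f n q (Lpoly f n q) := by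
  have h := exists_isOrthProjPoly hq hf n
  rw [Lpoly, dif_pos h]
  exact h.choose_spec

theorem IsOrthProjPoly.circNormSq_le {n : ℕ} {L : ℂ[X]} (hL : IsOrthProjPoly f n q L)
    (hq : ∀ z ∈ sphere (0 : ℂ) 1, q.eval z ≠ 0) (hf : MemL2 f) {L₀ : ℂ[X]}
    (hL₀ : L₀.degree < n) :
    circNormSq (fun z => f z - ratFun L q z) ≤ circNormSq (fun z => f z - ratFun L₀ q z) := by
  have he := hf.sub (memL2_ratFun L hq)
  have hw := memL2_ratFun (L - L₀) hq
  have hsum : (he.add hw).toL2 = (hf.sub (memL2_ratFun L₀ hq)).toL2 :=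
    MemL2.toL2_congr _ _ fun z _ => by simp [ratFun, sub_div]
  have horth : ⟪hw.toL2, he.toL2⟫_ℂ = 0 := by
    have h := hL.2 (L - L₀) ((degree_sub_le _ _).trans_lt (max_lt hL.1 hL₀))
    rwa [circInner_eq_inner he hw, mul_eq_zero, or_iff_right (by simp [Real.pi_ne_zero])] at h
  rw [circNormSq_eq_norm_sq he, circNormSq_eq_norm_sq (hf.sub (memL2_ratFun L₀ hq)), ← hsum,
    MemL2.toL2_add he hw, add_comm, sq, sq,
    norm_add_sq_eq_norm_sq_add_norm_sq_of_inner_eq_zero _ _ horth]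
  gcongr
  exact le_add_of_nonneg_left (mul_self_nonneg _)

end Projection

theorem exists_eq_mul_add_mul_of_isCoprime {K : Type*} [Field K] {L q p : K[X]} {n : ℕ}
    (hco : IsCoprime L q) (hq : q.Monic) (hqn : q.natDegree = n) (hL : L.degree < n)
    (hp : p.degree < ((2 * n : ℕ) : WithBot ℕ)) :
    ∃ a b : K[X], a.degree < n ∧ b.degree < n ∧ p = a * q + b * L := by
  obtain ⟨u, v, huv⟩ := hco
  have hqdeg : q.degree = n := by rw [degree_eq_natDegree hq.ne_zero, hqn]
  set b := u * p %ₘ q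
  set a := p * v + (u * p /ₘ q) * L
  have hb : b.degree < n := hqdeg ▸ degree_modByMonic_lt _ hq
  have hpab : p = a * q + b * L := by
    linear_combination (-p) * huv - L * modByMonic_add_div (u * p) q
  have ha : a.degree < n := by
    have hbL : (b * L).degree < n + n := by
      rcases eq_or_ne L 0 with rfl | hL0
      · simp
      rw [degree_mul]
      exact WithBot.add_lt_add_of_lt_of_le (degree_ne_bot.2 hL0) hb hL.le
    have haq : (a * q).degree < n + n := by
      rw [eq_sub_of_add_eq hpab.symm]
      exact (degree_sub_le _ _).trans_lt (max_lt (by simpa [two_mul] using hp) hbL)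
    rw [degree_mul, hqdeg] at haq
    exact lt_of_add_lt_add_right haq
  exact ⟨a, b, ha, hb, hpab⟩

theorem hasDerivAt_of_abs_sub_le_sq {ψ : ℝ → ℝ} {c K : ℝ}
    (h : ∀ᶠ t in 𝓝 0, |ψ t - ψ 0 - t * c| ≤ K * t ^ 2) : HasDerivAt ψ c 0 := by
  rw [hasDerivAt_iff_isLittleO_nhds_zero]
  refine (Asymptotics.IsBigO.of_bound K ?_).trans_isLittleO
    (Asymptotics.isLittleO_pow_id one_lt_two)
  filter_upwards [h] with t ht
  simpa using ht

theorem hasDerivAt_of_eq_norm_add_smul_sub_sq_smul {V : Type*} [NormedAddCommGroup V]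
    [InnerProductSpace ℂ V] {ψ : ℝ → ℝ} {x w : V} {B : ℝ}
    (h : ∀ᶠ t : ℝ in 𝓝 0, ∃ r : V, ‖r‖ ≤ B ∧
      ψ t = ‖x + (t : ℂ) • w - (t : ℂ) ^ 2 • r‖ ^ 2) :
    HasDerivAt ψ (2 * (⟪x, w⟫_ℂ).re) 0 := by
  obtain ⟨r₀, hr₀, hψ₀⟩ := h.self_of_nhds
  have hB : 0 ≤ B := (norm_nonneg r₀).trans hr₀
  rw [Complex.ofReal_zero, zero_smul, add_zero, zero_pow two_ne_zero, zero_smul, sub_zero]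
    at hψ₀
  refine hasDerivAt_of_abs_sub_le_sq (K := 2 * ‖x‖ * B + (‖w‖ + B) ^ 2) ?_
  filter_upwards [h, Ioo_mem_nhds neg_one_lt_zero one_pos] with t ⟨r, hr, hψ⟩ ht
  set y := (t : ℂ) • w - (t : ℂ) ^ 2 • r with hy_def
  have hy : ‖y‖ ^ 2 ≤ t ^ 2 * (‖w‖ + B) ^ 2 := by
    have ht1 : |t| ≤ 1 := abs_le.2 ⟨ht.1.le, ht.2.le⟩
    have : ‖y‖ ≤ |t| * (‖w‖ + B) := calc
      ‖y‖ ≤ |t| * ‖w‖ + |t| ^ 2 * ‖r‖ := by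
        refine (norm_sub_le _ _).trans_eq ?_
        simp [norm_smul]
      _ ≤ |t| * (‖w‖ + B) := by
        nlinarith [abs_nonneg t, norm_nonneg w, mul_le_mul ht1 hr (norm_nonneg r) zero_le_one]
    calc ‖y‖ ^ 2 ≤ (|t| * (‖w‖ + B)) ^ 2 := by gcongr
      _ = t ^ 2 * (‖w‖ + B) ^ 2 := by rw [mul_pow, sq_abs]
  have hxy : (⟪x, y⟫_ℂ).re = t * (⟪x, w⟫_ℂ).re - t ^ 2 * (⟪x, r⟫_ℂ).re := by
    simp [y, ← Complex.ofReal_pow]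
  have hxr : |(⟪x, r⟫_ℂ).re| ≤ ‖x‖ * B :=
    (Complex.abs_re_le_norm _).trans ((norm_inner_le_norm _ _).trans (by gcongr))
  rw [hψ, hψ₀, add_sub_assoc, norm_add_sq (𝕜 := ℂ), ← hy_def, RCLike.re_to_complex, hxy,
    abs_le]
  obtain ⟨hxr₁, hxr₂⟩ := abs_le.1 hxr
  constructor <;> nlinarith [sq_nonneg t, norm_nonneg y,
    mul_le_mul_of_nonneg_left hxr₂ (sq_nonneg t), mul_le_mul_of_nonneg_left hxr₁ (sq_nonneg t)]

theorem eventually_half_norm_lt_norm_add_mul {Y : Type*} [TopologicalSpace Y] {K : Set Y}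
    (hK : IsCompact K) {u v : Y → ℂ} (hu : Continuous u) (hv : Continuous v)
    (hu0 : ∀ y ∈ K, u y ≠ 0) :
    ∀ᶠ t : ℝ in 𝓝 0, ∀ y ∈ K, ‖u y‖ / 2 < ‖u y + t * v y‖ := by
  refine hK.eventually_forall_of_forall_eventually fun y hy => ?_
  refine ContinuousAt.eventually_lt (f := fun p : ℝ × Y => ‖u p.2‖ / 2)
    (g := fun p => ‖u p.2 + p.1 * v p.2‖) (by fun_prop) (by fun_prop) ?_
  simpa using half_lt_self (norm_pos_iff.2 (hu0 y hy))

theorem ratFun_add_smul {L q b : ℂ[X]} {z : ℂ} (c : ℂ) (hq : q.eval z ≠ 0)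
    (hqc : (q + c • b).eval z ≠ 0) :
    ratFun L (q + c • b) z =
      ratFun L q z - c * ratFun (L * b) (q ^ 2) z +
        c ^ 2 * ratFun (L * b ^ 2) (q ^ 2 * (q + c • b)) z := by
  simp only [ratFun, eval_add, eval_smul, eval_mul, eval_pow, smul_eq_mul] at *
  field_simp
  ring

theorem eventually_eval_add_smul_ne_zero {q : ℂ[X]}
    (hq : ∀ z ∈ sphere (0 : ℂ) 1, q.eval z ≠ 0) (b : ℂ[X]) :
    ∀ᶠ t : ℝ in 𝓝 0, ∀ z ∈ sphere (0 : ℂ) 1, (q + (t : ℂ) • b).eval z ≠ 0 := by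
  filter_upwards [eventually_half_norm_lt_norm_add_mul (isCompact_sphere (0 : ℂ) 1)
    q.continuous b.continuous hq] with t ht z hz
  simpa using ne_zero_of_norm_ne_zero ((half_pos (norm_pos_iff.2 (hq z hz))).trans (ht z hz)).ne'

theorem norm_ratFun_mul_le {p q r : ℂ[X]} {z : ℂ} (hq : q.eval z ≠ 0)
    (hr : ‖q.eval z‖ / 2 < ‖r.eval z‖) :
    ‖ratFun p (q ^ 2 * r) z‖ ≤ 2 * ‖ratFun p (q ^ 3) z‖ := by
  have hq' := norm_pos_iff.2 hq
  simp only [ratFun, eval_mul, eval_pow, norm_div, norm_mul, norm_pow]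
  calc _ ≤ ‖p.eval z‖ / (‖q.eval z‖ ^ 2 * (‖q.eval z‖ / 2)) := by gcongr
    _ = 2 * (‖p.eval z‖ / ‖q.eval z‖ ^ 3) := by field_simp

theorem hasDerivAt_circNormSq_sub_ratFun_add_smul {f : ℂ → ℂ} (hf : MemL2 f) {q : ℂ[X]}
    (hq : ∀ z ∈ sphere (0 : ℂ) 1, q.eval z ≠ 0) (L b : ℂ[X]) :
    HasDerivAt (fun t : ℝ => circNormSq (fun z => f z - ratFun L (q + (t : ℂ) • b) z))
      (2 * (circInner (ratFun (L * b) (q ^ 2)) (fun z => f z - ratFun L q z)).re) 0 := by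
  have he := hf.sub (memL2_ratFun L hq)
  have hw := memL2_ratFun (L * b) (q := q ^ 2) fun z hz => by simpa using hq z hz
  obtain ⟨M, hM⟩ := (isCompact_sphere (0 : ℂ) 1).exists_bound_of_continuousOn
    (f := ratFun (L * b ^ 2) (q ^ 3))
    ((L * b ^ 2).continuous.continuousOn.div (q ^ 3).continuous.continuousOn
      fun z hz => by simpa using hq z hz)
  have hM0 : 0 ≤ M := (norm_nonneg _).trans (hM 1 (by simp))
  have hscaled : HasDerivAt
      (fun t : ℝ => 2 * Real.pi * circNormSq (fun z => f z - ratFun L (q + (t : ℂ) • b) z))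
      (2 * (⟪he.toL2, hw.toL2⟫_ℂ).re) 0 := by
    -- the remainder `L b² / (q² (q + t b))` is at most `2 M` on the circle
    -- as soon as `|q + t b| > |q| / 2` there
    refine hasDerivAt_of_eq_norm_add_smul_sub_sq_smul (B := √(2 * Real.pi) * (2 * M)) ?_
    filter_upwards [eventually_half_norm_lt_norm_add_mul (isCompact_sphere (0 : ℂ) 1)
      q.continuous b.continuous hq, eventually_eval_add_smul_ne_zero hq b] with t ht hqt
    have hr := memL2_ratFun (L * b ^ 2) (q := q ^ 2 * (q + (t : ℂ) • b))
      fun z hz => by simpa [hq z hz] using hqt z hz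
    refine ⟨hr.toL2, hr.norm_toL2_le (by positivity) fun z hz => ?_, ?_⟩
    · have hlt : ‖q.eval z‖ / 2 < ‖(q + (t : ℂ) • b).eval z‖ := by simpa using ht z hz
      exact (norm_ratFun_mul_le (hq z hz) hlt).trans (by gcongr; exact hM z hz)
    · rw [circNormSq_eq_norm_sq (hf.sub (memL2_ratFun L hqt)), ← mul_assoc,
        mul_inv_cancel₀ Real.two_pi_pos.ne', one_mul, ← MemL2.toL2_const_mul,
        ← MemL2.toL2_const_mul, ← MemL2.toL2_add, ← MemL2.toL2_sub]
      congr 2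
      exact MemL2.toL2_congr _ _ fun z hz => by
        rw [ratFun_add_smul _ (hq z hz) (hqt z hz)]
        ring
  have h := hscaled.const_mul (2 * Real.pi)⁻¹
  simp only [← mul_assoc, inv_mul_cancel₀ Real.two_pi_pos.ne', one_mul] at h
  rw [circInner_eq_inner hw he, Complex.re_ofReal_mul]
  exact h.congr_deriv (by ring)

theorem MemMn.eval_ne_zero {n : ℕ} {q : ℂ[X]} (hq : MemMn n q) :
    ∀ z ∈ sphere (0 : ℂ) 1, q.eval z ≠ 0 := fun z hz hqz =>
  (hq.2.2 z ((mem_roots hq.1.ne_zero).2 hqz)).ne (mem_sphere_zero_iff_norm.1 hz)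

section Critical

variable {f : ℂ → ℂ} {n : ℕ} {q : ℂ[X]}

theorem IsCriticalPhi.re_circInner_eq_zero (hcrit : IsCriticalPhi f n q) (hf : MemL2 f)
    (hq : ∀ z ∈ sphere (0 : ℂ) 1, q.eval z ≠ 0) (v : Fin n → ℂ) :
    (circInner (ratFun (Lpoly f n q * liftPoly n v) (q ^ 2))
      (fun z => f z - ratFun (Lpoly f n q) q z)).re = 0 := by
  obtain ⟨d, rfl, hd⟩ := hcrit
  set L := Lpoly f n (monicOf n d)
  have hψ := hasDerivAt_circNormSq_sub_ratFun_add_smul hf hq L (liftPoly n v)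
  have hφ : HasDerivAt (fun t : ℝ => phiCoord f n (d + t • v)) 0 0 := hd v
  have hle : ∀ᶠ t : ℝ in 𝓝 0, phiCoord f n (d + t • v) ≤
      circNormSq (fun z => f z - ratFun L (monicOf n d + (t : ℂ) • liftPoly n v) z) := by
    filter_upwards [eventually_eval_add_smul_ne_zero hq (liftPoly n v)] with t ht
    rw [phiCoord, monicOf_add_smul]
    exact (isOrthProjPoly_Lpoly ht hf n).circNormSq_le ht hf (isOrthProjPoly_Lpoly hq hf n).1
  have hmin : IsLocalMin (fun t : ℝ =>
      circNormSq (fun z => f z - ratFun L (monicOf n d + (t : ℂ) • liftPoly n v) z) -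
        phiCoord f n (d + t • v)) 0 := by
    refine hle.mono fun t ht => ?_
    simpa [phiCoord, L] using ht
  have := hmin.hasDerivAt_eq_zero (hψ.sub hφ)
  linarith

theorem IsCriticalPhi.circInner_eq_zero (hcrit : IsCriticalPhi f n q) (hf : MemL2 f)
    (hq : ∀ z ∈ sphere (0 : ℂ) 1, q.eval z ≠ 0) {b : ℂ[X]} (hb : b.degree < n) :
    circInner (ratFun (Lpoly f n q * b) (q ^ 2))
      (fun z => f z - ratFun (Lpoly f n q) q z) = 0 := by
  obtain ⟨v, rfl⟩ := exists_liftPoly_eq hb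
  have him := hcrit.re_circInner_eq_zero hf hq (Complex.I • v)
  have hI : ratFun (Lpoly f n q * liftPoly n (Complex.I • v)) (q ^ 2) =
      fun z => Complex.I * ratFun (Lpoly f n q * liftPoly n v) (q ^ 2) z := by
    ext z
    simp [ratFun, liftPoly_smul, mul_div_assoc]
  rw [hI, circInner_const_mul_left] at him
  exact Complex.ext (hcrit.re_circInner_eq_zero hf hq v) (by simpa using him)

end Critical

theorem double_orthogonality_general
    (f : ℂ → ℂ) (hf : MemH2bar0 f) (n : ℕ) (q : ℂ[X]) (hq : MemMn n q)
    (hcrit : IsCriticalPhi f n q)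
    (hirr : IsCoprime (Lpoly f n q) q) :
    ∀ p : ℂ[X], p.degree < ((2 * n : ℕ) : WithBot ℕ) →
      circInner (fun z => p.eval z / (q.eval z) ^ 2)
        (fun z => f z - ratFun (Lpoly f n q) q z) = 0 := by
  intro p hp
  have hq0 := hq.eval_ne_zero
  have hq20 : ∀ z ∈ sphere (0 : ℂ) 1, (q ^ 2).eval z ≠ 0 := fun z hz => by
    simpa using hq0 z hz
  set L := Lpoly f n q
  have hL := isOrthProjPoly_Lpoly hq0 hf.1 n
  obtain ⟨a, b, ha, hb, rfl⟩ := exists_eq_mul_add_mul_of_isCoprime hirr hq.1 hq.2.1 hL.1 hp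
  have hsplit : (fun z => (a * q + b * L).eval z / q.eval z ^ 2) =
      fun z => ratFun a q z + ratFun (L * b) (q ^ 2) z := by
    ext z
    by_cases hz : q.eval z = 0
    · simp [ratFun, hz]
    · simp only [ratFun, eval_add, eval_mul, eval_pow]
      field_simp
  rw [hsplit, circInner_add_left (memL2_ratFun a hq0) (memL2_ratFun _ hq20)
    (hf.1.sub (memL2_ratFun L hq0)), circInner_conj_symm, hL.2 a ha, map_zero, zero_add]
  exact hcrit.circInner_eq_zero hf.1 hq0 hb

/-- **Orthogonality relation (3.4).** If `q ∈ M_n` is an irreducible critical point of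
`φ_{f,n}`, then `⟨p/q², f − L_q/q⟩ = 0` for every `p ∈ P_{2n−1}`. -/
theorem double_orthogonality
    (f : ℂ → ℂ) (hf : MemH2bar0 f) (n : ℕ) (q : ℂ[X]) (hq : MemMn n q)
    (hL : IsOrthProjPoly f n q (Lpoly f n q))
    (hcrit : IsCriticalPhi f n q)
    (hirr : IsCoprime (Lpoly f n q) q) :
    ∀ p : ℂ[X], p.degree < ((2 * n : ℕ) : WithBot ℕ) →
      circInner (fun z => p.eval z / (q.eval z) ^ 2)
        (fun z => f z - ratFun (Lpoly f n q) q z) = 0 :=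
  double_orthogonality_general f hf n q hq hcrit hirr

end RatApprox
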